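/- arXiv:1709.05157 — 8 statements merged into one kernel-verified Lean document; each statement's English description precedes it below -/
import Mathlib

section
/- For all rational numbers x and y, x < y if and only if there exist rational numbers t, u, v, w such that x ≠ y and x + t² + u² + v² + w² = y. -/
/-! A nonnegative rational `n / d` equals `n d / d²`, and Lagrange's four squares theorem writes
the natural number `n d` as a sum of four squares; dividing each of them by `d` writes `y - x`
as a sum of four rational squares. -/

theorem Rat.exists_eq_four_sq_of_nonneg {q : ℚ} (hq : 0 ≤ q) :
    ∃ t u v w : ℚ, q = t ^ 2 + u ^ 2 + v ^ 2 + w ^ 2 := by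
  obtain ⟨a, b, c, e, habce⟩ := Nat.sum_four_squares (q.num.natAbs * q.den)
  refine ⟨a / q.den, b / q.den, c / q.den, e / q.den, ?_⟩
  have hnum : (q.num.natAbs : ℚ) = q * q.den := by
    rw [Nat.cast_natAbs, Int.cast_abs, abs_of_nonneg (by exact_mod_cast Rat.num_nonneg.mpr hq),
      Rat.mul_den_eq_num]
  have hden : (q.den : ℚ) ≠ 0 := Nat.cast_ne_zero.mpr q.den_ne_zero
  have hsum : ((a : ℚ) ^ 2 + b ^ 2 + c ^ 2 + e ^ 2) = q * q.den ^ 2 := by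
    rw [show q * q.den ^ 2 = q.num.natAbs * q.den by rw [hnum]; ring]
    exact_mod_cast habce
  field_simp
  linear_combination -hsum

/-- Definability of the order in `⟨ℚ; +, ×⟩` via four squares. -/
theorem rat_lt_iff_four_squares (x y : ℚ) :
    x < y ↔ ∃ t u v w : ℚ, x ≠ y ∧ x + t ^ 2 + u ^ 2 + v ^ 2 + w ^ 2 = y := by
  constructor
  · intro hxy
    obtain ⟨t, u, v, w, h⟩ := Rat.exists_eq_four_sq_of_nonneg (sub_nonneg.mpr hxy.le)
    exact ⟨t, u, v, w, hxy.ne, by linear_combination -h⟩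
  · rintro ⟨t, u, v, w, hne, rfl⟩
    refine lt_of_le_of_ne ?_ hne
    nlinarith [sq_nonneg t, sq_nonneg u, sq_nonneg v, sq_nonneg w]
end

section
/- Robinson's definition of addition from successor and multiplication in ℕ: for all natural numbers x, y, z, we have z = x + y if and only if either (z = 0 and x = z and y = z), or (z ≠ 0 and (z·x + 1)·(z·y + 1) = z·z·(x·y + 1) + 1). -/
/-- Robinson's definition of addition from successor and multiplication in ℕ. -/
theorem robinson_add_nat (x y z : ℕ) :
    z = x + y ↔
      (z = 0 ∧ x = z ∧ y = z) ∨
        (z ≠ 0 ∧ (z * x + 1) * (z * y + 1) = z * z * (x * y + 1) + 1) := by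
  constructor
  · intro h
    rcases Nat.eq_zero_or_pos z with hz | hz
    · left
      subst hz
      omega
    · right
      refine ⟨hz.ne', ?_⟩
      subst h
      ring
  · rintro (⟨h0, hx, hy⟩ | ⟨hz, he⟩)
    · omega
    · have : z * (x + y) = z * z := by nlinarith
      have := Nat.eq_of_mul_eq_mul_left (Nat.pos_of_ne_zero hz) this
      omega
end

section
/- Robinson's definition of addition from successor and multiplication in ℤ: for all integers x, y, z, we have z = x + y if and only if either (z = 0 and y = −x), or (z ≠ 0 and (z·x + 1)·(z·y + 1) = z·z·(x·y + 1) + 1). -/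
/-- Robinson's definition of addition from successor and multiplication in ℤ. -/
theorem robinson_add_int (x y z : ℤ) :
    z = x + y ↔
      (z = 0 ∧ y = -x) ∨
        (z ≠ 0 ∧ (z * x + 1) * (z * y + 1) = z * z * (x * y + 1) + 1) := by
  rcases eq_or_ne z 0 with hz | hz
  · subst hz; constructor
    · intro h; left; exact ⟨rfl, by linarith⟩
    · rintro (⟨-, h⟩ | ⟨h, -⟩)
      · linarith
      · exact absurd rfl h
  · constructor
    · intro h; right; exact ⟨hz, by subst h; ring⟩
    · rintro (⟨h, -⟩ | ⟨-, h⟩)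
      · exact absurd h hz
      · have : z * (x + y) = z * z := by nlinarith
        have := mul_left_cancel₀ hz this
        omega
end

section
/- Hinman's definition of addition from successor and multiplication in ℤ: for all integers x, y, z, we have z = x + y if and only if either (z·(z + 1) = z and x·y + 1 = (x + 1)·(y + 1)), or (z·(z + 1) ≠ z and (z·x + 1)·(z·y + 1) = z·z·(x·y + 1) + 1). -/
/-- Hinman's definition of addition from successor and multiplication in ℤ. -/
theorem hinman_add_int (x y z : ℤ) :
    z = x + y ↔
      (z * (z + 1) = z ∧ x * y + 1 = (x + 1) * (y + 1)) ∨
        (z * (z + 1) ≠ z ∧ (z * x + 1) * (z * y + 1) = z * z * (x * y + 1) + 1) := by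
  have hz : z * (z + 1) = z ↔ z = 0 := by constructor <;> intro h <;> nlinarith [sq_nonneg z]
  constructor
  · intro h
    by_cases h0 : z = 0
    · left; subst h0; constructor; · ring
      have : x = -y := by linarith
      subst this; ring
    · right
      refine ⟨fun hc => h0 (hz.mp hc), by subst h; ring⟩
  · rintro (⟨h1, h2⟩ | ⟨h1, h2⟩)
    · have : z = 0 := hz.mp h1
      subst this; nlinarith
    · have h0 : z ≠ 0 := fun hc => h1 (hz.mpr hc)
      have : z * (x + y) = z * z := by nlinarith
      have := mul_left_cancel₀ h0 this
      linarith
end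

section
/- The theory of dense linear orders without endpoints completely axiomatizes the order theory of the rational and of the real numbers: for every first-order sentence φ in the language containing only the binary relation symbol <, φ is true in the structure ⟨ℚ; <⟩ if and only if φ is a semantic consequence of the theory of dense linear orders without endpoints, and likewise φ is true in ⟨ℝ; <⟩ if and only if φ is a semantic consequence of that theory. -/
open FirstOrder Language

/-- The structure on a type with `<`, interpreting the unique binary relation
symbol of the language of orders as the strict order `<`. -/
def ltStructure (M : Type*) [LT M] : Language.order.Structure M where
  funMap := fun f => f.elim
  RelMap := fun r x =>
    match r with
    | .le => x 0 < x 1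

/-- The theory of dense linear orders without endpoints for a strict order
symbol, consisting of the axioms O1–O6. -/
def strictDLO : Language.order.Theory :=
  { -- O1 : ∀ x y (x < y → ¬ y < x)
    ∀' ∀' (leSymb.boundedFormula₂ (&0) (&1) ⟹ ∼(leSymb.boundedFormula₂ (&1) (&0))),
    -- O2 : ∀ x y z (x < y ∧ y < z → x < z)
    ∀' ∀' ∀' ((leSymb.boundedFormula₂ (&0) (&1) ⊓ leSymb.boundedFormula₂ (&1) (&2)) ⟹
        leSymb.boundedFormula₂ (&0) (&2)),
    -- O3 : ∀ x y (x < y ∨ x = y ∨ y < x)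
    ∀' ∀' (leSymb.boundedFormula₂ (&0) (&1) ⊔ Term.bdEqual (&0) (&1) ⊔
        leSymb.boundedFormula₂ (&1) (&0)),
    -- O4 : ∀ x y (x < y → ∃ z (x < z ∧ z < y))
    ∀' ∀' (leSymb.boundedFormula₂ (&0) (&1) ⟹
        ∃' (leSymb.boundedFormula₂ (&0) (&2) ⊓ leSymb.boundedFormula₂ (&2) (&1))),
    -- O5 : ∀ x ∃ y (x < y)
    ∀' ∃' (leSymb.boundedFormula₂ (&0) (&1)),
    -- O6 : ∀ x ∃ y (y < x)
    ∀' ∃' (leSymb.boundedFormula₂ (&1) (&0)) }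

/-!
The axioms say precisely that the interpretation of the symbol is a dense strict linear order
without endpoints. By Cantor's back-and-forth theorem any two countable such orders are
isomorphic, so `strictDLO` is `ℵ₀`-categorical; its models have no greatest element, hence are
infinite, and the Łoś–Vaught test shows that `strictDLO` is complete. As `ℚ` and `ℝ` are models,
each of them satisfies exactly the consequences of `strictDLO`.
-/

section StrictDLO

variable {M : Type*} [Language.order.Structure M]

def relLT (a b : M) : Prop := Structure.RelMap (leSymb : Language.order.Relations 2) ![a, b]

theorem relMap_leSymb_iff_relLT (x : Fin 2 → M) :
    Structure.RelMap (leSymb : Language.order.Relations 2) x ↔ relLT (x 0) (x 1) := by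
  rw [relLT, ← FinVec.etaExpand_eq x]
  rfl

theorem model_strictDLO_iff :
    M ⊨ strictDLO ↔
      (∀ a b : M, relLT a b → ¬ relLT b a) ∧
      (∀ a b c : M, relLT a b → relLT b c → relLT a c) ∧
      (∀ a b : M, (relLT a b ∨ a = b) ∨ relLT b a) ∧
      (∀ a b : M, relLT a b → ∃ c, relLT a c ∧ relLT c b) ∧
      (∀ a : M, ∃ b, relLT a b) ∧
      (∀ a : M, ∃ b, relLT b a) := by
  simp [strictDLO, Theory.model_iff, relLT, Sentence.Realize, Formula.Realize, Fin.snoc]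

theorem ltStructure_model_strictDLO (N : Type*) [LinearOrder N] [DenselyOrdered N]
    [NoMaxOrder N] [NoMinOrder N] : letI := ltStructure N; N ⊨ strictDLO := by
  let := ltStructure N
  refine model_strictDLO_iff.2 ⟨fun a b => lt_asymm, fun a b c => lt_trans,
    fun a b => ?_, fun a b => exists_between, exists_gt, exists_lt⟩
  rcases lt_trichotomy a b with h | h | h
  exacts [Or.inl (Or.inl h), Or.inl (Or.inr h), Or.inr h]

theorem exists_linearOrder_of_model_strictDLO [M ⊨ strictDLO] :
    ∃ _ : LinearOrder M, DenselyOrdered M ∧ NoMaxOrder M ∧ NoMinOrder M ∧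
      ∀ a b : M, a < b ↔ relLT a b := by
  classical
  obtain ⟨hasymm, htrans, htri, hdense, hmax, hmin⟩ := model_strictDLO_iff.1 ‹M ⊨ strictDLO›
  have : IsStrictTotalOrder M relLT :=
    { trichotomous := fun a b hab hba => by rcases htri a b with (h | h) | h <;> tauto
      irrefl := fun a h => hasymm a a h h
      trans := htrans }
  let : LinearOrder M := linearOrderOfSTO relLT
  exact ⟨_, ⟨hdense⟩, ⟨hmax⟩, ⟨hmin⟩, fun _ _ => Iff.rfl⟩

end StrictDLO

open Cardinal

theorem aleph0_categorical_strictDLO : Categorical ℵ₀ strictDLO := by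
  rintro M N hM hN
  obtain ⟨_, _, _, _, hltM⟩ := exists_linearOrder_of_model_strictDLO (M := M)
  obtain ⟨_, _, _, _, hltN⟩ := exists_linearOrder_of_model_strictDLO (M := N)
  have : Countable M := mk_le_aleph0_iff.1 hM.le
  have : Countable N := mk_le_aleph0_iff.1 hN.le
  obtain ⟨e⟩ := Order.iso_of_countable_dense M N
  refine ⟨⟨e.toEquiv, fun f => isEmptyElim f, fun {n} r x => ?_⟩⟩
  cases r
  -- `cases` leaves the symbol as `orderRel.le`, which `rw` does not unify with `leSymb`
  change Structure.RelMap (leSymb : Language.order.Relations 2) (e ∘ x) ↔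
    Structure.RelMap (leSymb : Language.order.Relations 2) x
  rw [relMap_leSymb_iff_relLT, relMap_leSymb_iff_relLT, ← hltM, ← hltN]
  exact e.lt_iff_lt

theorem strictDLO_isComplete : strictDLO.IsComplete := by
  refine aleph0_categorical_strictDLO.{0}.isComplete _ _ le_rfl
    (by simp [Language.order.card_eq_one]) ⟨?_⟩ fun M => ?_
  · letI := ltStructure ℚ
    have := ltStructure_model_strictDLO ℚ
    exact Theory.ModelType.of strictDLO ℚ
  · obtain ⟨_, _, _, _, -⟩ := exists_linearOrder_of_model_strictDLO (M := M)
    exact NoMaxOrder.infinite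

theorem ltStructure_realize_iff_strictDLO_models (N : Type*) [LinearOrder N] [DenselyOrdered N]
    [NoMaxOrder N] [NoMinOrder N] [Nonempty N] (φ : Language.order.Sentence) :
    (letI := ltStructure N; N ⊨ φ) ↔ strictDLO ⊨ᵇ φ :=
  letI := ltStructure N
  haveI := ltStructure_model_strictDLO N
  strictDLO_isComplete.realize_sentence_iff φ N

/-- The theory of dense linear orders without endpoints completely axiomatizes
the order theory of ℚ and of ℝ. -/
theorem strictDLO_axiomatizes_rat_and_real (φ : Language.order.Sentence) :
    ((letI := ltStructure ℚ; ℚ ⊨ φ) ↔ strictDLO ⊨ᵇ φ) ∧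
      ((letI := ltStructure ℝ; ℝ ⊨ φ) ↔ strictDLO ⊨ᵇ φ) :=
  ⟨ltStructure_realize_iff_strictDLO_models ℚ φ, ltStructure_realize_iff_strictDLO_models ℝ φ⟩
end

section
/- Let p ≥ 1, let n_0, ..., n_{p−1} be natural numbers with each n_i > 1, let t_0, ..., t_{p−1} and x be positive rational numbers, let n be the least common multiple of the n_i, let d_{i,j} be the greatest common divisor of n_i and n_j for i ≠ j, let c_0, ..., c_{p−1} be integers satisfying Σ_{i<p} c_i·(n/n_i) = 1, and set β = Π_{i<p} t_i^{c_i·(n/n_i)} (integer exponents). Then: x·t_i is an n_i-th power for every i < p, if and only if, x·β is an n-th power and t_i·t_j^{−1} is a d_{i,j}-th power for all i ≠ j. -/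
/-!
If every `x * tᵢ` is an `nᵢ`-th power, then `x * β = ∏ᵢ (x * tᵢ) ^ (cᵢ N / nᵢ)` is an `N`-th power
because `∑ cᵢ N / nᵢ = 1`, and `tᵢ / tⱼ = (x * tᵢ) / (x * tⱼ)` is a `gcd (nᵢ, nⱼ)`-th power.
Conversely `x * tᵢ = (x * β) * ∏ⱼ (tᵢ / tⱼ) ^ (cⱼ N / nⱼ)`: the first factor is an `N`-th power, and
the `j`-th factor a `gcd (nᵢ, nⱼ) N / nⱼ`-th power; both exponents are multiples of `nᵢ`.
-/

open Finset

theorem Nat.dvd_gcd_mul_div_of_dvd {a b N : ℕ} (ha : a ∣ N) (hb : b ∣ N) :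
    a ∣ Nat.gcd a b * (N / b) := by
  obtain ⟨m, rfl⟩ := Nat.lcm_dvd ha hb
  rcases b.eq_zero_or_pos with rfl | hb0
  · simp
  refine ⟨m, ?_⟩
  rw [← Nat.mul_div_assoc _ hb, ← mul_assoc, Nat.gcd_mul_lcm,
    mul_right_comm, Nat.mul_div_cancel _ hb0]

theorem zpow_sum₀ {G ι : Type*} [CommGroupWithZero G] {a : G} (ha : a ≠ 0) (s : Finset ι)
    (f : ι → ℤ) : a ^ (∑ i ∈ s, f i) = ∏ i ∈ s, a ^ f i := by
  classical
  induction s using Finset.induction with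
  | empty => simp
  | insert _ _ h ih => rw [sum_insert h, prod_insert h, zpow_add₀ ha, ih]

theorem eq_prod_zpow_of_sum_eq_one {G ι : Type*} [CommGroupWithZero G] {s : Finset ι} {a : G}
    (ha : a ≠ 0) {e : ι → ℤ} (he : ∑ i ∈ s, e i = 1) : a = ∏ i ∈ s, a ^ e i := by
  rw [← zpow_sum₀ ha, he, zpow_one]

def IsPow {M : Type*} [Monoid M] (m : ℕ) (a : M) : Prop := ∃ y, a = y ^ m

namespace IsPow

variable {M : Type*} {m k : ℕ} {a b : M}

theorem one [Monoid M] : IsPow m (1 : M) := ⟨1, (one_pow m).symm⟩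

theorem mul [CommMonoid M] : IsPow m a → IsPow m b → IsPow m (a * b)
  | ⟨y, hy⟩, ⟨z, hz⟩ => ⟨y * z, by rw [hy, hz, mul_pow]⟩

theorem inv [DivisionMonoid M] : IsPow m a → IsPow m a⁻¹
  | ⟨y, hy⟩ => ⟨y⁻¹, by rw [hy, inv_pow]⟩

theorem zpow [DivisionMonoid M] (j : ℤ) : IsPow m a → IsPow m (a ^ j)
  | ⟨y, hy⟩ => ⟨y ^ j, by
      rw [hy, ← zpow_natCast, ← zpow_natCast, ← zpow_mul, ← zpow_mul, mul_comm]⟩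

theorem pow [Monoid M] (e : ℕ) : IsPow m a → IsPow (m * e) (a ^ e)
  | ⟨y, hy⟩ => ⟨y, by rw [hy, pow_mul]⟩

theorem of_dvd [Monoid M] (hkm : k ∣ m) : IsPow m a → IsPow k a
  | ⟨y, hy⟩ => by
    obtain ⟨l, rfl⟩ := hkm
    exact ⟨y ^ l, by rw [hy, pow_mul']⟩

theorem prod [CommMonoid M] {ι : Type*} [Fintype ι] {f : ι → M} (h : ∀ i, IsPow m (f i)) :
    IsPow m (∏ i, f i) := by
  choose y hy using h
  exact ⟨∏ i, y i, by rw [← prod_pow]; exact prod_congr rfl fun i _ => hy i⟩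

theorem mul_inv_of_mul [CommGroupWithZero M] {x : M} (hx : x ≠ 0) (ha : IsPow m (x * a))
    (hb : IsPow k (x * b)) : IsPow (Nat.gcd m k) (a * b⁻¹) := by
  have h := (ha.of_dvd (Nat.gcd_dvd_left m k)).mul (hb.of_dvd (Nat.gcd_dvd_right m k)).inv
  rwa [mul_inv, mul_mul_mul_comm, mul_inv_cancel₀ hx, one_mul] at h

end IsPow

section CommonMultiple

variable {K ι : Type*} [CommGroupWithZero K] [Fintype ι] {n : ι → ℕ} {N : ℕ} {c : ι → ℤ}
  {t : ι → K} {x : K}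

theorem isPow_mul_prod_zpow (hx : x ≠ 0) (hdvd : ∀ i, n i ∣ N)
    (hc : ∑ i, c i * ((N / n i : ℕ) : ℤ) = 1) (h : ∀ i, IsPow (n i) (x * t i)) :
    IsPow N (x * ∏ i, t i ^ (c i * ((N / n i : ℕ) : ℤ))) := by
  rw [eq_prod_zpow_of_sum_eq_one hx hc, ← prod_mul_distrib]
  refine IsPow.prod fun i => ?_
  rw [← mul_zpow, zpow_mul, zpow_natCast]
  simpa only [Nat.mul_div_cancel' (hdvd i)] using ((h i).zpow (c i)).pow (N / n i)

theorem isPow_mul_of_isPow_mul_prod_zpow (ht : ∀ i, t i ≠ 0) (hdvd : ∀ i, n i ∣ N)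
    (hc : ∑ i, c i * ((N / n i : ℕ) : ℤ) = 1)
    (hβ : IsPow N (x * ∏ i, t i ^ (c i * ((N / n i : ℕ) : ℤ))))
    (hquot : ∀ i j, i ≠ j → IsPow (Nat.gcd (n i) (n j)) (t i * (t j)⁻¹)) (i : ι) :
    IsPow (n i) (x * t i) := by
  set β := ∏ i, t i ^ (c i * ((N / n i : ℕ) : ℤ)) with hβ_def
  have hβ0 : β ≠ 0 := prod_ne_zero_iff.mpr fun j _ => zpow_ne_zero _ (ht j)
  have hfactor : ∀ j, IsPow (n i) ((t i * (t j)⁻¹) ^ (c j * ((N / n j : ℕ) : ℤ))) := by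
    intro j
    obtain rfl | hij := eq_or_ne i j
    · rw [mul_inv_cancel₀ (ht i), one_zpow]
      exact IsPow.one
    rw [zpow_mul, zpow_natCast]
    exact (((hquot i j hij).zpow (c j)).pow _).of_dvd
      (Nat.dvd_gcd_mul_div_of_dvd (hdvd i) (hdvd j))
  have hxt : x * t i = (x * β) * ∏ j, (t i * (t j)⁻¹) ^ (c j * ((N / n j : ℕ) : ℤ)) := by
    simp only [mul_zpow, inv_zpow, prod_mul_distrib, prod_inv_distrib,
      ← eq_prod_zpow_of_sum_eq_one (ht i) hc, ← hβ_def]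
    field_simp
  rw [hxt]
  exact (hβ.of_dvd (hdvd i)).mul (IsPow.prod hfactor)

end CommonMultiple

theorem pow_conditions_iff_general (p : ℕ) (n : Fin p → ℕ)
    (t : Fin p → ℚ) (ht : ∀ i, 0 < t i) (x : ℚ) (hx : 0 < x)
    (N : ℕ) (hN : N = Finset.univ.lcm n)
    (c : Fin p → ℤ) (hc : ∑ i, c i * ((N / n i : ℕ) : ℤ) = 1)
    (β : ℚ) (hβ : β = ∏ i, t i ^ (c i * ((N / n i : ℕ) : ℤ))) :
    (∀ i, ∃ y : ℚ, x * t i = y ^ n i) ↔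
      ((∃ y : ℚ, x * β = y ^ N) ∧
        ∀ i j, i ≠ j → ∃ y : ℚ, t i * (t j)⁻¹ = y ^ Nat.gcd (n i) (n j)) := by
  have hdvd : ∀ i, n i ∣ N := fun i => hN ▸ dvd_lcm (mem_univ i)
  subst hβ
  constructor
  · intro h
    exact ⟨isPow_mul_prod_zpow hx.ne' hdvd hc h,
      fun i j _ => IsPow.mul_inv_of_mul hx.ne' (h i) (h j)⟩
  · rintro ⟨hxβ, hquot⟩ i
    exact isPow_mul_of_isPow_mul_prod_zpow (fun j => (ht j).ne') hdvd hc hxβ hquot i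

/-- Lemma on simultaneous power conditions for positive rationals. -/
theorem pow_conditions_iff (p : ℕ) (hp : 1 ≤ p) (n : Fin p → ℕ) (hn : ∀ i, 1 < n i)
    (t : Fin p → ℚ) (ht : ∀ i, 0 < t i) (x : ℚ) (hx : 0 < x)
    (N : ℕ) (hN : N = Finset.univ.lcm n)
    (c : Fin p → ℤ) (hc : ∑ i, c i * ((N / n i : ℕ) : ℤ) = 1)
    (β : ℚ) (hβ : β = ∏ i, t i ^ (c i * ((N / n i : ℕ) : ℤ))) :
    (∀ i, ∃ y : ℚ, x * t i = y ^ n i) ↔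
      ((∃ y : ℚ, x * β = y ^ N) ∧
        ∀ i j, i ≠ j → ∃ y : ℚ, t i * (t j)⁻¹ = y ^ Nat.gcd (n i) (n j)) :=
  pow_conditions_iff_general p n t ht x hx N hN c hc β hβ
end

section
/- For every natural number n ≥ 1, every finite sequence x_0, ..., x_{q−1} of positive rational numbers, and every sequence of natural numbers m_0, ..., m_{q−1} with each m_j > 1 and m_j not dividing n, there exists a positive rational number y such that for every j < q, the rational number y^n·x_j is not an m_j-th power. -/
/-!
Choose a prime `p` that divides no numerator or denominator of the `x j`, and take `y = p`.
Then `y ^ n * x j` has `p`-adic valuation exactly `n`, whereas the `p`-adic valuation of an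
`m`-th power is a multiple of `m`.
-/

theorem padicValNat_eq_zero_of_lt {p k : ℕ} (h : k < p) : padicValNat p k = 0 := by
  rcases k.eq_zero_or_pos with rfl | hk
  · exact padicValNat_zero_right p
  · exact padicValNat.eq_zero_of_not_dvd (Nat.not_dvd_of_pos_of_lt hk h)

theorem padicValRat_eq_zero_of_lt {p : ℕ} {q : ℚ} (hnum : q.num.natAbs < p) (hden : q.den < p) :
    padicValRat p q = 0 := by
  simp only [padicValRat, padicValInt, padicValNat_eq_zero_of_lt hnum,
    padicValNat_eq_zero_of_lt hden, sub_self, Nat.cast_zero]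

theorem exists_prime_forall_padicValRat_eq_zero {ι : Type*} [Fintype ι] (x : ι → ℚ) :
    ∃ p : ℕ, p.Prime ∧ ∀ i, padicValRat p (x i) = 0 := by
  obtain ⟨p, hbound, hp⟩ :=
    Nat.exists_infinite_primes (∑ i, ((x i).num.natAbs + (x i).den) + 1)
  refine ⟨p, hp, fun i => ?_⟩
  have hi : (x i).num.natAbs + (x i).den ≤ ∑ i, ((x i).num.natAbs + (x i).den) :=
    Finset.single_le_sum (f := fun i => (x i).num.natAbs + (x i).den)
      (fun _ _ => Nat.zero_le _) (Finset.mem_univ i)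
  exact padicValRat_eq_zero_of_lt (by omega) (by omega)

theorem padicValRat_prime_pow_mul {p : ℕ} [Fact p.Prime] (n : ℕ) {x : ℚ} (hx : x ≠ 0) :
    padicValRat p ((p : ℚ) ^ n * x) = n + padicValRat p x := by
  have hp : (p : ℚ) ≠ 0 := Nat.cast_ne_zero.2 (Fact.out : p.Prime).ne_zero
  rw [padicValRat.mul (pow_ne_zero n hp) hx, padicValRat.pow,
    padicValRat.self (Fact.out : p.Prime).one_lt, mul_one]

theorem exists_pow_mul_not_pow_general (n : ℕ) (q : ℕ) (x : Fin q → ℚ)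
    (hx : ∀ j, 0 < x j) (m : Fin q → ℕ) (hmn : ∀ j, ¬ m j ∣ n) :
    ∃ y : ℚ, 0 < y ∧ ∀ j, ¬ ∃ w : ℚ, y ^ n * x j = w ^ m j := by
  obtain ⟨p, hp, hval⟩ := exists_prime_forall_padicValRat_eq_zero x
  have : Fact p.Prime := ⟨hp⟩
  refine ⟨p, Nat.cast_pos.2 hp.pos, fun j ⟨w, hw⟩ => hmn j ?_⟩
  have hvw := congrArg (padicValRat p) hw
  rw [padicValRat_prime_pow_mul n (hx j).ne', hval, add_zero, padicValRat.pow] at hvw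
  exact Int.natCast_dvd_natCast.1 ⟨padicValRat p w, hvw⟩

/-- There is a positive rational `y` such that none of the `y ^ n * x j` is an
`m j`-th power, provided each `m j > 1` does not divide `n`. -/
theorem exists_pow_mul_not_pow (n : ℕ) (hn : 1 ≤ n) (q : ℕ) (x : Fin q → ℚ)
    (hx : ∀ j, 0 < x j) (m : Fin q → ℕ) (hm : ∀ j, 1 < m j) (hmn : ∀ j, ¬ m j ∣ n) :
    ∃ y : ℚ, 0 < y ∧ ∀ j, ¬ ∃ w : ℚ, y ^ n * x j = w ^ m j :=
  exists_pow_mul_not_pow_general n q x hx m hmn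
end

section
/- Let n ≥ 1 be a natural number, let m_0, ..., m_{q−1} be natural numbers with each m_j > 1, let t and s_0, ..., s_{q−1} be positive rational numbers, and let u be a positive rational number. Then there exists a positive rational number x with u < x such that x·t is an n-th power and, for every j < q, x·s_j is not an m_j-th power, if and only if, for every j < q with m_j dividing n, t^{−1}·s_j is not an m_j-th power. -/
/-!
Necessity: if `x * t` is an `n`-th power and `m ∣ n`, then `x * s = (x * t) * (t⁻¹ * s)` is an
`m`-th power as soon as `t⁻¹ * s` is one. Sufficiency: take `x = p ^ n / t` for a prime
`p > u * t` that divides no numerator or denominator of the `t⁻¹ * s j`. Then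
`x * s j = p ^ n * (t⁻¹ * s j)` has `p`-adic valuation `n`, so it can only be an `m j`-th power
if `m j ∣ n`, and then dividing by `p ^ n` makes `t⁻¹ * s j` one as well.
-/

theorem exists_mul_eq_pow_of_dvd {M : Type*} [CommMonoid M] {a b : M} {m n : ℕ} (hmn : m ∣ n)
    (ha : ∃ w, a = w ^ n) (hb : ∃ v, b = v ^ m) : ∃ w, a * b = w ^ m := by
  obtain ⟨w, rfl⟩ := ha
  obtain ⟨v, rfl⟩ := hb
  obtain ⟨k, rfl⟩ := hmn
  exact ⟨w ^ k * v, by rw [mul_pow, ← pow_mul, mul_comm k]⟩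

theorem padicValRat_eq_zero_of_lt_s16 {p : ℕ} {r : ℚ} (hr : r ≠ 0) (hnum : r.num.natAbs < p)
    (hden : r.den < p) : padicValRat p r = 0 := by
  have hnum' : ¬ p ∣ r.num.natAbs :=
    Nat.not_dvd_of_pos_of_lt (Int.natAbs_pos.2 (Rat.num_ne_zero.2 hr)) hnum
  rw [padicValRat_def, padicValInt, padicValNat.eq_zero_of_not_dvd hnum',
    padicValNat.eq_zero_of_not_dvd (Nat.not_dvd_of_pos_of_lt r.pos hden)]
  rfl

theorem exists_prime_gt_forall_padicValRat_eq_zero {ι : Type*} [Fintype ι] (r : ι → ℚ)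
    (hr : ∀ i, r i ≠ 0) (b : ℕ) :
    ∃ p, p.Prime ∧ b < p ∧ ∀ i, padicValRat p (r i) = 0 := by
  let size : ι → ℕ := fun i => (r i).num.natAbs + (r i).den
  obtain ⟨p, hp_gt, hp⟩ := Nat.exists_infinite_primes (b + ∑ i, size i + 1)
  have hle : ∀ i, (r i).num.natAbs + (r i).den ≤ ∑ i, size i := fun i =>
    Finset.single_le_sum (f := size) (fun i _ => Nat.zero_le _) (Finset.mem_univ i)
  refine ⟨p, hp, by omega, fun i => padicValRat_eq_zero_of_lt_s16 (hr i) ?_ ?_⟩ <;>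
    (have := hle i; omega)

theorem dvd_and_exists_eq_pow_of_prime_pow_mul_eq_pow {p : ℕ} [Fact p.Prime] {r : ℚ}
    (hr0 : r ≠ 0) (hr : padicValRat p r = 0) {m n : ℕ} (h : ∃ w, (p : ℚ) ^ n * r = w ^ m) :
    m ∣ n ∧ ∃ v, r = v ^ m := by
  obtain ⟨w, hw⟩ := h
  have hp0 : (p : ℚ) ^ n ≠ 0 := pow_ne_zero _ (Nat.cast_ne_zero.2 (Fact.out : p.Prime).ne_zero)
  have hval : padicValRat p ((p : ℚ) ^ n * r) = n := by
    rw [padicValRat.mul hp0 hr0, hr, padicValRat.pow, padicValRat.self (Fact.out : p.Prime).one_lt]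
    simp
  have hmn : m ∣ n := by
    rw [← Int.natCast_dvd_natCast, ← hval, hw, padicValRat.pow]
    exact Dvd.intro _ rfl
  obtain ⟨k, rfl⟩ := hmn
  refine ⟨Dvd.intro k rfl, w / (p : ℚ) ^ k, ?_⟩
  rw [div_pow, ← hw, ← pow_mul, mul_comm k, mul_div_cancel_left₀ _ hp0]

theorem qe_one_sided_general (n : ℕ) (hn : 1 ≤ n) (q : ℕ) (m : Fin q → ℕ)
    (t : ℚ) (ht : 0 < t) (s : Fin q → ℚ) (hs : ∀ j, 0 < s j) (u : ℚ) :
    (∃ x : ℚ, 0 < x ∧ u < x ∧ (∃ w : ℚ, x * t = w ^ n) ∧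
        ∀ j, ¬ ∃ w : ℚ, x * s j = w ^ m j) ↔
      ∀ j, m j ∣ n → ¬ ∃ w : ℚ, t⁻¹ * s j = w ^ m j := by
  constructor
  · rintro ⟨x, -, -, hxt, hxs⟩ j hdvd hts
    refine hxs j ?_
    rw [show x * s j = x * t * (t⁻¹ * s j) by field_simp]
    exact exists_mul_eq_pow_of_dvd hdvd hxt hts
  · intro h
    obtain ⟨p, hp, hup, hval⟩ := exists_prime_gt_forall_padicValRat_eq_zero
      (fun j => t⁻¹ * s j) (fun j => (mul_pos (inv_pos.2 ht) (hs j)).ne') ⌈u * t⌉₊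
    have := Fact.mk hp
    have hp0 : (0 : ℚ) < p := by exact_mod_cast hp.pos
    refine ⟨p ^ n / t, by positivity, ?_, ⟨p, by field_simp⟩, fun j hj => ?_⟩
    · rw [lt_div_iff₀ ht]
      calc u * t < p := Nat.lt_of_ceil_lt hup
        _ ≤ p ^ n := le_self_pow₀ (by exact_mod_cast hp.one_lt.le) (by omega)
    · have hxs : (p : ℚ) ^ n / t * s j = p ^ n * (t⁻¹ * s j) := by ring
      obtain ⟨hdvd, hpow⟩ := dvd_and_exists_eq_pow_of_prime_pow_mul_eq_pow
        (mul_pos (inv_pos.2 ht) (hs j)).ne' (hval j) (hxs ▸ hj)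
      exact h j hdvd hpow

/-- Quantifier-elimination lemma for `⟨ℚ⁺; <, ×⟩`: one-sided case. -/
theorem qe_one_sided (n : ℕ) (hn : 1 ≤ n) (q : ℕ) (m : Fin q → ℕ) (hm : ∀ j, 1 < m j)
    (t : ℚ) (ht : 0 < t) (s : Fin q → ℚ) (hs : ∀ j, 0 < s j) (u : ℚ) (hu : 0 < u) :
    (∃ x : ℚ, 0 < x ∧ u < x ∧ (∃ w : ℚ, x * t = w ^ n) ∧
        ∀ j, ¬ ∃ w : ℚ, x * s j = w ^ m j) ↔
      ∀ j, m j ∣ n → ¬ ∃ w : ℚ, t⁻¹ * s j = w ^ m j :=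
  qe_one_sided_general n hn q m t ht s hs u
end
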